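/- Let ρ be a probability measure on Y, let t ∈ [0,1), and let a* ∈ A attain θ_ρ(t), i.e. quantile_{1−t}(u(a*,·); ρ) = θ_ρ(t). Define C_t = {y ∈ Y : u(a*, y) ≥ θ_ρ(t)}. Then: (i) C_t is nonempty; (ii) ρ(C_t) > t, and in particular ρ(C_t) ≥ t; and (iii) max_{a∈A} min_{y∈C_t} u(a,y) = θ_ρ(t). That is, among all sets with conditional coverage at least t, the set C_t attains the maximal max-min value, which equals θ_ρ(t). -/

import Mathlib

/-!
Let `q = quantile_{1-t}(u(a*,·); ρ) = θ_ρ(t)`. Every sublevel set `{u(a*,·) ≤ z}` with `z < q` has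
mass below `1 - t`. Since `Y` is finite, `{u(a*,·) < q}` equals such a sublevel set (take `z` the
largest value below `q`), so its complement `C_t` has mass above `t`, and is therefore nonempty.
For any action `a`, every sublevel set of `u(a,·)` strictly below its minimum over `C_t` lies in
the complement of `C_t`, so that minimum is at most the quantile of `u(a,·)`, hence at most
`θ_ρ(t)`; on `C_t` the action `a*` has all values at least `θ_ρ(t)`.
-/

open MeasureTheory ENNReal

/-- The `α`-quantile of `f` under `ρ`: `inf {z | ρ{y : f y ≤ z} ≥ α}`. -/
noncomputable def quantileRA {Y : Type*} [Fintype Y] [MeasurableSpace Y]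
    (ρ : Measure Y) (f : Y → ℝ) (α : ℝ) : ℝ :=
  sInf {z : ℝ | ENNReal.ofReal α ≤ ρ {y | f y ≤ z}}

section Coverage

variable {Ω : Type*} [MeasurableSpace Ω] {ρ : Measure Ω} [IsProbabilityMeasure ρ]

theorem ofReal_lt_measure_of_measure_compl_lt {s : Set Ω} {t : ℝ} (ht : 0 ≤ t)
    (h : ρ sᶜ < ENNReal.ofReal (1 - t)) : ENNReal.ofReal t < ρ s := by
  have h1t : 0 < 1 - t := ENNReal.ofReal_pos.1 (zero_le.trans_lt h)
  by_contra! hle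
  have : (1 : ℝ≥0∞) < 1 :=
    calc (1 : ℝ≥0∞) = ρ (s ∪ sᶜ) := by rw [Set.union_compl_self, measure_univ]
      _ ≤ ρ s + ρ sᶜ := measure_union_le s sᶜ
      _ < ENNReal.ofReal t + ENNReal.ofReal (1 - t) :=
        ENNReal.add_lt_add_of_le_of_lt (measure_ne_top ρ s) hle h
      _ = 1 := by rw [← ENNReal.ofReal_add ht h1t.le]; norm_num
  exact lt_irrefl 1 this

end Coverage

section Quantile

variable {Y : Type*} [Fintype Y] [MeasurableSpace Y] {ρ : Measure Y} {f : Y → ℝ} {α : ℝ}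

theorem bddBelow_quantileRA_set (hα : 0 < α) :
    BddBelow {z : ℝ | ENNReal.ofReal α ≤ ρ {y | f y ≤ z}} := by
  obtain ⟨b, hb⟩ := (Set.finite_range f).bddBelow
  refine ⟨b, fun z hz => ?_⟩
  obtain ⟨y, hy⟩ : {y | f y ≤ z}.Nonempty := by
    rw [Set.nonempty_iff_ne_empty]
    rintro hempty
    rw [Set.mem_ofPred_eq, hempty, measure_empty] at hz
    exact (ENNReal.ofReal_pos.2 hα).not_ge hz
  exact (hb ⟨y, rfl⟩).trans hy

theorem nonempty_quantileRA_set [IsProbabilityMeasure ρ] (hα : α ≤ 1) :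
    {z : ℝ | ENNReal.ofReal α ≤ ρ {y | f y ≤ z}}.Nonempty := by
  obtain ⟨b, hb⟩ := (Set.finite_range f).bddAbove
  refine ⟨b, ?_⟩
  have huniv : {y | f y ≤ b} = Set.univ := Set.eq_univ_of_forall fun y => hb ⟨y, rfl⟩
  rw [Set.mem_ofPred_eq, huniv, measure_univ]
  exact ENNReal.ofReal_le_one.2 hα

theorem measure_lt_quantileRA_lt (hα : 0 < α) :
    ρ {y | f y < quantileRA ρ f α} < ENNReal.ofReal α := by
  set q := quantileRA ρ f α
  rcases ({y | f y < q} : Set Y).eq_empty_or_nonempty with hempty | hne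
  · rw [hempty, measure_empty]
    exact ENNReal.ofReal_pos.2 hα
  obtain ⟨y₀, hy₀, hmax⟩ := Set.exists_max_image _ f (Set.toFinite _) hne
  have hnot : ¬ ENNReal.ofReal α ≤ ρ {y | f y ≤ f y₀} := fun hmem =>
    (csInf_le (bddBelow_quantileRA_set hα) hmem).not_gt hy₀
  exact (measure_mono hmax).trans_lt (not_le.1 hnot)

theorem inf'_le_quantileRA [IsProbabilityMeasure ρ] (hα : α ≤ 1) {C : Finset Y}
    (hC : C.Nonempty) (hcompl : ρ (↑C)ᶜ < ENNReal.ofReal α) :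
    C.inf' hC f ≤ quantileRA ρ f α := by
  refine le_csInf (nonempty_quantileRA_set hα) fun z hz => ?_
  by_contra! hzlt
  have hsub : {y | f y ≤ z} ⊆ (↑C)ᶜ := fun y hy hyC =>
    (hzlt.trans_le (C.inf'_le f hyC)).not_ge hy
  exact (measure_mono hsub).trans_lt hcompl |>.not_ge hz

end Quantile

theorem stmt_7_general {Y A : Type*} [Fintype Y] [Fintype A] [Nonempty A]
    [MeasurableSpace Y]
    (u : A → Y → ℝ)
    (ρ : Measure Y) [IsProbabilityMeasure ρ]
    (t : ℝ) (ht0 : 0 ≤ t) (ht1 : t < 1)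
    (θt : ℝ)
    (hθt : θt = Finset.univ.sup' Finset.univ_nonempty
      (fun a => quantileRA ρ (u a) (1 - t)))
    (astar : A) (hastar : quantileRA ρ (u astar) (1 - t) = θt)
    (Ct : Finset Y)
    (hCt : Ct = Finset.univ.filter (fun y => θt ≤ u astar y)) :
    ∃ hne : Ct.Nonempty,
      ENNReal.ofReal t < ρ ↑Ct ∧
      ENNReal.ofReal t ≤ ρ ↑Ct ∧
      Finset.univ.sup' Finset.univ_nonempty (fun a => Ct.inf' hne (u a)) = θt := by
  have hCt_compl : (↑Ct : Set Y)ᶜ = {y | u astar y < θt} := by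
    ext y
    simp [hCt]
  have hcompl : ρ (↑Ct)ᶜ < ENNReal.ofReal (1 - t) := by
    rw [hCt_compl, ← hastar]
    exact measure_lt_quantileRA_lt (by linarith)
  have hcov : ENNReal.ofReal t < ρ ↑Ct := ofReal_lt_measure_of_measure_compl_lt ht0 hcompl
  have hne : Ct.Nonempty := Finset.nonempty_iff_ne_empty.2 fun hempty => by
    rw [hempty, Finset.coe_empty, measure_empty] at hcov
    exact ENNReal.not_lt_zero hcov
  refine ⟨hne, hcov, hcov.le, le_antisymm ?_ ?_⟩
  · refine Finset.sup'_le _ _ fun a _ => (inf'_le_quantileRA (by linarith) hne hcompl).trans ?_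
    rw [hθt]
    exact Finset.le_sup' (fun a => quantileRA ρ (u a) (1 - t)) (Finset.mem_univ a)
  · refine Finset.le_sup'_of_le _ (Finset.mem_univ astar) (Finset.le_inf' _ _ fun y hy => ?_)
    simpa [hCt] using hy

/-- The set `C_t = {y : u(a*, y) ≥ θ_ρ(t)}`, where `a*` attains
`θ_ρ(t) = max_a quantile_{1-t}(u(a,·); ρ)`, is nonempty, has coverage exceeding (hence at
least) `t`, and its max-min value equals `θ_ρ(t)`. -/
theorem stmt_7 {Y A : Type*} [Fintype Y] [Nonempty Y] [Fintype A] [Nonempty A]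
    [MeasurableSpace Y] [MeasurableSingletonClass Y]
    (u : A → Y → ℝ)
    (ρ : Measure Y) [IsProbabilityMeasure ρ]
    (t : ℝ) (ht0 : 0 ≤ t) (ht1 : t < 1)
    (θt : ℝ)
    (hθt : θt = Finset.univ.sup' Finset.univ_nonempty
      (fun a => quantileRA ρ (u a) (1 - t)))
    (astar : A) (hastar : quantileRA ρ (u astar) (1 - t) = θt)
    (Ct : Finset Y)
    (hCt : Ct = Finset.univ.filter (fun y => θt ≤ u astar y)) :
    ∃ hne : Ct.Nonempty,
      ENNReal.ofReal t < ρ ↑Ct ∧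
      ENNReal.ofReal t ≤ ρ ↑Ct ∧
      Finset.univ.sup' Finset.univ_nonempty (fun a => Ct.inf' hne (u a)) = θt :=
  stmt_7_general u ρ t ht0 ht1 θt hθt astar hastar Ct hCt
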